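/- The Cooper–Cantwell conditional also satisfies Import-Export with quasi-conjunction: for any a, b, c in {0, 1/2, 1}, cc(a, cc(b, c)) = cc(qand(a,b), c), where qand is Cooper's quasi-conjunction. -/
import Mathlib


/-- Trivalent truth values: 0, 1/2, 1. -/
inductive V : Type
  | zero
  | half
  | one
deriving DecidableEq, Repr

open V

/-- Strong Kleene negation. -/
def vneg : V → V
  | zero => one
  | half => half
  | one => zero

/-- Strong Kleene conjunction (minimum). -/
def vmin : V → V → V
  | one, b => b
  | half, one => half
  | half, half => half
  | half, zero => zero
  | zero, _ => zero

/-- Strong Kleene disjunction (maximum). -/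
def vmax : V → V → V
  | zero, b => b
  | half, zero => half
  | half, half => half
  | half, one => one
  | one, _ => one

/-- de Finetti conditional. -/
def df : V → V → V
  | one, c => c
  | _, _ => half

/-- Cooper–Cantwell conditional. -/
def cc : V → V → V
  | zero, _ => half
  | _, c => c

/-- Cooper's quasi-conjunction. -/
def qand : V → V → V
  | zero, _ => zero
  | _, zero => zero
  | one, _ => one
  | _, one => one
  | half, half => half

/-- Cooper's quasi-disjunction. -/
def qor : V → V → V
  | one, _ => one
  | _, one => one
  | zero, _ => zero
  | _, zero => zero
  | half, half => half

/-- "value ≥ 1/2", i.e. designated / tolerantly true. -/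
def des (x : V) : Prop := x ≠ V.zero

/-- Import-Export for the Cooper–Cantwell conditional with quasi-conjunction. -/
theorem cc_import_export_qand (a b c : V) : cc a (cc b c) = cc (qand a b) c := by cases a <;> cases b <;> cases c <;> rfl
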